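/- arXiv:2006.00588 — 2 statements merged into one kernel-verified Lean document; each statement's English description precedes it below -/
import Mathlib

section
/- Let L be a fixed graph. There exists a constant c = c(L) > 0 such that for all sufficiently large n, every proper edge-colouring ψ of K_{L,n} admits a set C ⊆ V(R) of size at least c·n that is compatible with L with respect to ψ: every x ∈ C is of interest to L (no colour on its edges to V(L) appears on E(L)), and the colour sets {ψ(xk) : k ∈ V(L)} for x ∈ C are pairwise disjoint. -/
open SimpleGraph

/-- The join of two vertex-disjoint graphs: both graphs together with all edges
between them. -/
def graphJoin {α β : Type*} (L : SimpleGraph α) (R : SimpleGraph β) :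
    SimpleGraph (α ⊕ β) :=
  (L ⊕g R) ⊔ SimpleGraph.fromRel (fun x y => x.isLeft ∧ y.isRight)

/-- An edge-colouring is proper if any two distinct edges sharing a vertex get
distinct colours. -/
def IsProperEdgeColouring {V : Type*} (G : SimpleGraph V) (ψ : Sym2 V → ℕ) : Prop :=
  ∀ e₁ ∈ G.edgeSet, ∀ e₂ ∈ G.edgeSet, e₁ ≠ e₂ → (∃ v, v ∈ e₁ ∧ v ∈ e₂) → ψ e₁ ≠ ψ e₂

/-! In a proper colouring of `K_{L,n}` the colours of the edges from a fixed vertex of `L` to the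
independent side are pairwise distinct. Hence every prescribed colour at a vertex of `L` is met
by at most one vertex of the independent side: at most `|V(L)|·|Sym2 V(L)|` vertices fail to be
of interest, and each vertex shares a star colour with at most `|V(L)|²` others. Among the
remaining at least `n/2` vertices, a greedy independent set in this clash graph of maximum degree
`|V(L)|²` has size at least `n / (2 (|V(L)|² + 1))`. -/

open Finset

theorem SimpleGraph.exists_isIndepSet_subset_card_le_mul {V : Type*} [DecidableEq V]
    (G : SimpleGraph V) [G.LocallyFinite] {d : ℕ} (hd : ∀ v, G.degree v ≤ d) (S : Finset V) :
    ∃ I ⊆ S, G.IsIndepSet (I : Set V) ∧ #S ≤ (d + 1) * #I := by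
  induction S using Finset.strongInduction with
  | H S ih =>
  obtain rfl | ⟨x, hx⟩ := S.eq_empty_or_nonempty
  · exact ⟨∅, subset_refl _, by simp, by simp⟩
  set S' := S \ insert x (G.neighborFinset x)
  have hxS' : x ∉ S' := by simp [S']
  obtain ⟨I, hIS', hI, hcard⟩ := ih S' (ssubset_of_subset_of_ne sdiff_subset fun h =>
    hxS' (h ▸ hx))
  have hxI : x ∉ I := fun h => hxS' (hIS' h)
  refine ⟨insert x I, insert_subset hx (hIS'.trans sdiff_subset), ?_, ?_⟩
  · have hnadj : ∀ y ∈ I, ¬G.Adj x y := fun y hy hxy =>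
      (mem_sdiff.mp (hIS' hy)).2 (mem_insert_of_mem ((mem_neighborFinset G x y).mpr hxy))
    rw [coe_insert, isIndepSet_iff, Set.pairwise_insert_of_notMem hxI]
    exact ⟨hI, fun y hy => ⟨hnadj y hy, fun hyx => hnadj y hy hyx.symm⟩⟩
  · calc #S ≤ #S' + #(insert x (G.neighborFinset x)) := card_le_card_sdiff_add_card
      _ ≤ #S' + (d + 1) := by
        gcongr
        exact (card_insert_le _ _).trans
          (Nat.add_le_add_right ((card_neighborFinset_eq_degree G x).trans_le (hd x)) 1)
      _ ≤ (d + 1) * #(insert x I) := by rw [card_insert_of_notMem hxI]; linarith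

theorem Finset.card_filter_exists_apply_eq_le {ι V γ : Type*} [Fintype ι] [Fintype V]
    [DecidableEq V] [DecidableEq γ] (g : ι → V → γ) (hg : ∀ i, Function.Injective (g i))
    (c : ι → γ) : #{v | ∃ i, g i v = c i} ≤ Fintype.card ι := by
  calc #{v | ∃ i, g i v = c i} ≤ #(univ.biUnion fun i => {v | g i v = c i}) := by
        gcongr; intro v; simp
    _ ≤ ∑ i, #{v | g i v = c i} := card_biUnion_le
    _ ≤ ∑ _i : ι, 1 := by
        gcongr with i
        exact card_le_one.mpr fun v hv w hw =>
          hg i ((mem_filter.mp hv).2.trans (mem_filter.mp hw).2.symm)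
    _ = Fintype.card ι := by simp

theorem IsProperEdgeColouring.injOn_neighborSet {V : Type*} {G : SimpleGraph V}
    {ψ : Sym2 V → ℕ} (hψ : IsProperEdgeColouring G ψ) (v : V) :
    Set.InjOn (fun w => ψ s(v, w)) (G.neighborSet v) := by
  intro x hx y hy hxy
  by_contra hne
  exact hψ _ hx _ hy (fun h => hne (Sym2.congr_right.mp h)) ⟨v, by simp, by simp⟩ hxy

section Join

variable {α β : Type*} {L : SimpleGraph α} {R : SimpleGraph β} {ψ : Sym2 (α ⊕ β) → ℕ}

theorem graphJoin_adj_inl_inr (a : α) (x : β) : (graphJoin L R).Adj (.inl a) (.inr x) :=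
  Or.inr ((fromRel_adj _ _ _).mpr ⟨by simp, Or.inl ⟨rfl, rfl⟩⟩)

theorem IsProperEdgeColouring.injective_star (hψ : IsProperEdgeColouring (graphJoin L R) ψ)
    (a : α) : Function.Injective fun x : β => ψ s(.inl a, .inr x) := fun x y hxy =>
  Sum.inr_injective <| hψ.injOn_neighborSet (.inl a) (graphJoin_adj_inl_inr a x)
    (graphJoin_adj_inl_inr a y) hxy

variable (ψ) in
def starClashGraph : SimpleGraph β where
  Adj x y := x ≠ y ∧ ∃ a b : α, ψ s(.inl a, .inr x) = ψ s(.inl b, .inr y)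
  symm.symm _ _ := fun ⟨hne, a, b, h⟩ => ⟨hne.symm, b, a, h.symm⟩
  loopless.irrefl _ h := h.1 rfl

instance [Fintype α] [DecidableEq β] : DecidableRel (starClashGraph ψ).Adj := fun x y =>
  inferInstanceAs (Decidable (x ≠ y ∧ ∃ a b : α, ψ s(.inl a, .inr x) = ψ s(.inl b, .inr y)))

theorem IsProperEdgeColouring.card_filter_exists_star_eq_le [Fintype β] [DecidableEq β]
    {ι : Type*} [Fintype ι] (hψ : IsProperEdgeColouring (graphJoin L R) ψ) (v : ι → α)
    (c : ι → ℕ) : #{x | ∃ i, ψ s(.inl (v i), .inr x) = c i} ≤ Fintype.card ι :=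
  card_filter_exists_apply_eq_le (fun i x => ψ s(.inl (v i), .inr x))
    (fun i => hψ.injective_star (v i)) c

theorem IsProperEdgeColouring.degree_starClashGraph_le [Fintype α] [Fintype β] [DecidableEq β]
    (hψ : IsProperEdgeColouring (graphJoin L R) ψ) (x : β) :
    (starClashGraph ψ).degree x ≤ Fintype.card (α × α) := by
  rw [← card_neighborFinset_eq_degree]
  calc #((starClashGraph ψ).neighborFinset x)
      ≤ #{y | ∃ p : α × α, ψ s(.inl p.2, .inr y) = ψ s(.inl p.1, .inr x)} := by
        refine card_le_card fun y hy => ?_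
        obtain ⟨-, a, b, h⟩ := (mem_neighborFinset _ x y).mp hy
        exact mem_filter.mpr ⟨mem_univ y, (a, b), h.symm⟩
    _ ≤ Fintype.card (α × α) := hψ.card_filter_exists_star_eq_le Prod.snd _

end Join

/-- for every fixed graph `L` there is a constant `c > 0` such that for
all sufficiently large `n`, every proper edge-colouring `ψ` of the join `K_{L,n}`
admits a set `C` of at least `c·n` vertices of the independent side which is
compatible with `L` with respect to `ψ`: every `x ∈ C` is of interest to `L` (no
colour of an edge from `x` to `V(L)` appears on `E(L)`) and the colour sets of the
stars from distinct members of `C` to `V(L)` are pairwise disjoint. -/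
theorem exists_large_compatible_set {α : Type*} [Fintype α] (L : SimpleGraph α) :
    ∃ c : ℝ, 0 < c ∧ ∃ N : ℕ, ∀ n : ℕ, N ≤ n →
      ∀ ψ : Sym2 (α ⊕ Fin n) → ℕ,
        IsProperEdgeColouring (graphJoin L (⊥ : SimpleGraph (Fin n))) ψ →
        ∃ C : Set (Fin n),
          c * n ≤ C.ncard ∧
          (∀ x ∈ C, ∀ a : α, ∀ e ∈ L.edgeSet,
            ψ (Sym2.mk (Sum.inl a) (Sum.inr x)) ≠ ψ (e.map Sum.inl)) ∧
          (∀ x ∈ C, ∀ y ∈ C, x ≠ y → ∀ a b : α,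
            ψ (Sym2.mk (Sum.inl a) (Sum.inr x)) ≠ ψ (Sym2.mk (Sum.inl b) (Sum.inr y))) := by
  classical
  refine ⟨1 / (2 * (Fintype.card (α × α) + 1)), by positivity, 2 * Fintype.card (α × Sym2 α),
    fun n hn ψ hψ => ?_⟩
  set B : Finset (Fin n) := {x | ∃ p : α × Sym2 α, ψ s(.inl p.1, .inr x) = ψ (p.2.map .inl)}
  have hB : #B ≤ Fintype.card (α × Sym2 α) := hψ.card_filter_exists_star_eq_le Prod.fst _
  obtain ⟨I, hIB, hI, hcard⟩ :=
    (starClashGraph ψ).exists_isIndepSet_subset_card_le_mul hψ.degree_starClashGraph_le Bᶜ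
  set d := Fintype.card (α × α)
  refine ⟨I, ?_, fun x hx a e _ h => ?_, fun x hx y hy hxy a b h => hI hx hy hxy ⟨hxy, a, b, h⟩⟩
  · have hBc : #Bᶜ + #B = n := by rw [card_compl, Fintype.card_fin]; omega
    have hn' : (n : ℝ) ≤ 2 * (d + 1) * #I := by
      have : n ≤ 2 * ((d + 1) * #I) := by omega
      exact_mod_cast this.trans_eq (mul_assoc _ _ _).symm
    rw [Set.ncard_coe_finset, div_mul_eq_mul_div, one_mul, div_le_iff₀ (by positivity)]
    linarith
  · exact mem_compl.mp (hIB hx) (mem_filter.mpr ⟨mem_univ _, (a, e), h⟩)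
end

section
/- Let F be the graph obtained from the star K_{1,25} by attaching 49 triangles to each of its 25 edges, where the third vertex of each triangle is new and unique to that triangle. Then the removal of any 24 matchings from F yields a graph that still contains a triangle. -/
open SimpleGraph

/-- Vertices of `F`: the centre, the 25 leaves, and a vertex `t_{i,j}` for each
leaf `i` and each `j ∈ [49]`. -/
abbrev FVert := Unit ⊕ (Fin 25 ⊕ Fin 25 × Fin 49)

/-- The graph `F` obtained from `K_{1,25}` by attaching `49` triangles to each of its
`25` edges, the third vertex of each triangle being new and unique to it: the centre
is adjacent to every leaf `lᵢ` and every `t_{i,j}`, and `t_{i,j}` is adjacent to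
`lᵢ`. -/
def Fgraph : SimpleGraph FVert :=
  SimpleGraph.fromRel (fun a b =>
    match a, b with
    | Sum.inl _, Sum.inr _ => True
    | Sum.inr (Sum.inl i), Sum.inr (Sum.inr p) => p.1 = i
    | _, _ => False)

/-- A set of edges of `G` is a matching if its members are pairwise disjoint edges. -/
def IsMatchingEdgeSet {V : Type*} (G : SimpleGraph V) (M : Set (Sym2 V)) : Prop :=
  M ⊆ G.edgeSet ∧ ∀ e₁ ∈ M, ∀ e₂ ∈ M, e₁ ≠ e₂ → ∀ v, ¬(v ∈ e₁ ∧ v ∈ e₂)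

open Function

/-!
A matching contains at most one edge at any vertex. The 24 matchings therefore meet at most 24
of the 25 disjoint classes of edges at the centre `c` (class `i`: the edges from `c` to `lᵢ` and
to the `t_{i,j}`), so some class `i` survives intact; and they remove at most 24 of the 49
edges `lᵢ t_{i,j}` at `lᵢ`, so some triangle `c lᵢ t_{i,j}` survives.
-/

theorem IsMatchingEdgeSet.eq_of_mem_of_mem {V : Type*} {G : SimpleGraph V} {M : Set (Sym2 V)}
    (hM : IsMatchingEdgeSet G M) {e₁ e₂ : Sym2 V} (h₁ : e₁ ∈ M) (h₂ : e₂ ∈ M) {v : V}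
    (hv₁ : v ∈ e₁) (hv₂ : v ∈ e₂) : e₁ = e₂ := by
  by_contra hne
  exact hM.2 e₁ h₁ e₂ h₂ hne v ⟨hv₁, hv₂⟩

theorem IsMatchingEdgeSet.exists_class_avoiding_iUnion {V ι κ : Type*} [Fintype ι] [Fintype κ]
    {G : SimpleGraph V} {M : κ → Set (Sym2 V)} (hM : ∀ k, IsMatchingEdgeSet G (M k)) (v : V)
    (S : ι → Set (Sym2 V)) (hS : Pairwise (Disjoint on S)) (hv : ∀ i, ∀ e ∈ S i, v ∈ e)
    (hcard : Fintype.card κ < Fintype.card ι) :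
    ∃ i, ∀ e ∈ S i, e ∉ ⋃ k, M k := by
  by_contra! hmet
  simp only [Set.mem_iUnion] at hmet
  choose e heS k hek using hmet
  have hk : Injective k := by
    intro i i' hii'
    by_contra hne
    have he : e i = e i' :=
      (hM (k i)).eq_of_mem_of_mem (hek i) (hii' ▸ hek i') (hv i _ (heS i)) (hv i' _ (heS i'))
    exact Set.disjoint_left.1 (hS hne) (heS i) (he ▸ heS i')
  exact (Fintype.card_le_of_injective k hk).not_gt hcard

namespace Fgraph

abbrev centre : FVert := Sum.inl ()

abbrev leaf (i : Fin 25) : FVert := Sum.inr (Sum.inl i)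

abbrev apex (i : Fin 25) (j : Fin 49) : FVert := Sum.inr (Sum.inr (i, j))

theorem adj_centre_leaf (i : Fin 25) : Fgraph.Adj centre (leaf i) := by
  simp [Fgraph]

theorem adj_leaf_apex (i : Fin 25) (j : Fin 49) : Fgraph.Adj (leaf i) (apex i j) := by
  simp [Fgraph]

theorem adj_centre_apex (i : Fin 25) (j : Fin 49) : Fgraph.Adj centre (apex i j) := by
  simp [Fgraph]

def centreEdges (i : Fin 25) : Set (Sym2 FVert) :=
  insert s(centre, leaf i) (Set.range fun j => s(centre, apex i j))

theorem pairwise_disjoint_centreEdges : Pairwise (Disjoint on centreEdges) := by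
  intro i i' hne
  simp [onFun, centreEdges, Set.disjoint_left, hne, Ne.symm hne]

theorem centre_mem_of_mem_centreEdges (i : Fin 25) : ∀ e ∈ centreEdges i, centre ∈ e := by
  rintro e (rfl | ⟨j, rfl⟩) <;> simp

end Fgraph

open Fgraph in
/-- removing any `24` matchings from `F` leaves a graph which still
contains a triangle. -/
theorem triangle_survives_removal_of_24_matchings
    (M : Fin 24 → Set (Sym2 FVert))
    (hM : ∀ k, IsMatchingEdgeSet Fgraph (M k)) :
    ∃ a b c : FVert,
      Fgraph.Adj a b ∧ Fgraph.Adj b c ∧ Fgraph.Adj a c ∧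
      Sym2.mk a b ∉ ⋃ k, M k ∧
      Sym2.mk b c ∉ ⋃ k, M k ∧
      Sym2.mk a c ∉ ⋃ k, M k := by
  obtain ⟨i, hi⟩ := IsMatchingEdgeSet.exists_class_avoiding_iUnion hM centre centreEdges
    pairwise_disjoint_centreEdges centre_mem_of_mem_centreEdges (by simp)
  obtain ⟨j, hj⟩ := IsMatchingEdgeSet.exists_class_avoiding_iUnion hM (leaf i)
    (fun j => {s(leaf i, apex i j)}) (fun j j' hne => by simp [onFun, hne])
    (fun j => by simp) (by simp)
  exact ⟨centre, leaf i, apex i j, adj_centre_leaf i, adj_leaf_apex i j, adj_centre_apex i j,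
    hi _ (Set.mem_insert _ _), hj _ rfl, hi _ (Set.mem_insert_of_mem _ ⟨j, rfl⟩)⟩
end
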